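/- arXiv:2404.17850 — 2 statements merged into one kernel-verified Lean document; each statement's English description precedes it below -/
import Mathlib

section
/- Let a > 0, b : ℝ → ℝ twice differentiable with 0 ≤ b'' ≤ C_U everywhere, and θ, ζ ∈ ℝ^{n×q}. Suppose Y_{ij} are independent random variables with E[Y_{ij}] = b'(θ_{ij}) and Var(Y_{ij}) = a·b''(θ_{ij}). Then (1/(a²·n·q)) Σ_{i,j} E[ (Y_{ij}(θ_{ij} − ζ_{ij}) − b(θ_{ij}) + b(ζ_{ij}))² ] ≤ (C_U/(a·n·q)) ‖θ − ζ‖_F² + (C_U²/(4a²·n·q)) ‖θ − ζ‖_F⁴. -/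
open MeasureTheory

lemma tangent_line_le' {f f' : ℝ → ℝ} (hf : ∀ s, HasDerivAt f (f' s) s)
    (hmono : Monotone f') (x y : ℝ) : f' x * (y - x) ≤ f y - f x := by
  rcases lt_trichotomy x y with h | h | h
  · obtain ⟨c, hc, hc'⟩ := exists_hasDerivAt_eq_slope f f' h
      (fun t _ => (hf t).continuousAt.continuousWithinAt) (fun t _ => hf t)
    have heq : f y - f x = f' c * (y - x) := by
      rw [hc', div_mul_cancel₀ _ (sub_ne_zero.2 h.ne')]
    have hle : f' x ≤ f' c := hmono hc.1.le
    nlinarith [hc.1, hc.2]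
  · simp [h]
  · obtain ⟨c, hc, hc'⟩ := exists_hasDerivAt_eq_slope f f' h
      (fun t _ => (hf t).continuousAt.continuousWithinAt) (fun t _ => hf t)
    have heq : f x - f y = f' c * (x - y) := by
      rw [hc', div_mul_cancel₀ _ (sub_ne_zero.2 h.ne')]
    have hle : f' c ≤ f' x := hmono hc.2.le
    nlinarith [hc.1, hc.2]

lemma per_term_bound (a C_U v m c : ℝ) (ha : 0 < a) (hv1 : 0 ≤ v) (hv2 : v ≤ C_U)
    (hm0 : 0 ≤ m) (hm1 : m ≤ C_U / 2 * c ^ 2) :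
    c ^ 2 * (a * v) + m ^ 2 ≤ a * C_U * c ^ 2 + C_U ^ 2 / 4 * (c ^ 2) ^ 2 := by
  have h1 : c ^ 2 * (a * v) ≤ a * C_U * c ^ 2 := by
    nlinarith [mul_nonneg (mul_nonneg ha.le (sub_nonneg.2 hv2)) (sq_nonneg c)]
  have h2 : m ^ 2 ≤ C_U ^ 2 / 4 * (c ^ 2) ^ 2 := by
    nlinarith [mul_self_le_mul_self hm0 hm1]
  linarith

/-- Bound on the (normalized) second moment of the log-likelihood ratio for the
product exponential family. -/
theorem second_moment_bound {Ω : Type*} [MeasurableSpace Ω]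
    (μ : Measure Ω) [IsProbabilityMeasure μ]
    (n q : ℕ) (hn : 1 ≤ n) (hq : 1 ≤ q)
    (a C_U : ℝ) (ha : 0 < a) (hCU : 0 < C_U)
    (b b' b'' : ℝ → ℝ)
    (hb : ∀ s, HasDerivAt b (b' s) s)
    (hb' : ∀ s, HasDerivAt b' (b'' s) s)
    (hnn : ∀ s, 0 ≤ b'' s) (hub : ∀ s, b'' s ≤ C_U)
    (θ ζ : Matrix (Fin n) (Fin q) ℝ)
    (Y : Fin n × Fin q → Ω → ℝ)
    (hmeas : ∀ ij, Measurable (Y ij))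
    (hindep : ProbabilityTheory.iIndepFun Y μ)
    (hL2 : ∀ ij, MemLp (Y ij) 2 μ)
    (hmean : ∀ i j, ∫ ω, Y (i, j) ω ∂μ = b' (θ i j))
    (hvar : ∀ i j, ProbabilityTheory.variance (Y (i, j)) μ = a * b'' (θ i j)) :
    (1 / (a ^ 2 * n * q)) *
        ∑ i, ∑ j, ∫ ω, (Y (i, j) ω * (θ i j - ζ i j) - b (θ i j) + b (ζ i j)) ^ 2 ∂μ
      ≤ C_U / (a * n * q) * ∑ i, ∑ j, (θ i j - ζ i j) ^ 2
        + C_U ^ 2 / (4 * a ^ 2 * n * q) * (∑ i, ∑ j, (θ i j - ζ i j) ^ 2) ^ 2 := by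
  -- monotonicity facts
  have hbmono : Monotone b' := by
    apply monotone_of_deriv_nonneg (fun s => (hb' s).differentiableAt)
    intro s; rw [(hb' s).deriv]; exact hnn s
  have hhmono : Monotone (fun s => C_U * s - b' s) := by
    apply monotone_of_deriv_nonneg
    · exact fun s => ((hasDerivAt_id s).const_mul C_U |>.sub (hb' s)).differentiableAt
    · intro s
      have h : HasDerivAt (fun s => C_U * s - b' s) (C_U * 1 - b'' s) s :=
        ((hasDerivAt_id s).const_mul C_U).sub (hb' s)
      rw [h.deriv]; linarith [hub s]
  have hhd : ∀ s : ℝ, HasDerivAt (fun x => C_U / 2 * x ^ 2 - b x) (C_U * s - b' s) s := by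
    intro s
    have h1 : HasDerivAt (fun x : ℝ => C_U / 2 * x ^ 2) (C_U / 2 * (2 * s ^ 1)) s :=
      (hasDerivAt_pow 2 s).const_mul (C_U / 2)
    have h2 := h1.sub (hb s)
    refine h2.congr_deriv ?_; ring
  -- Taylor-type bounds on m = b' x * (x - y) - b x + b y
  have hm : ∀ x y : ℝ, 0 ≤ b' x * (x - y) - b x + b y ∧
      b' x * (x - y) - b x + b y ≤ C_U / 2 * (x - y) ^ 2 := by
    intro x y
    have h1 := tangent_line_le' hb hbmono x y
    have h2 := tangent_line_le' hhd hhmono x y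
    constructor <;> nlinarith
  -- per-entry bound
  have key : ∀ (i : Fin n) (j : Fin q),
      ∫ ω, (Y (i, j) ω * (θ i j - ζ i j) - b (θ i j) + b (ζ i j)) ^ 2 ∂μ
        ≤ a * C_U * (θ i j - ζ i j) ^ 2 + C_U ^ 2 / 4 * ((θ i j - ζ i j) ^ 2) ^ 2 := by
    intro i j
    have hYint : Integrable (Y (i, j)) μ := (hL2 (i, j)).integrable one_le_two
    have hY2int : Integrable (fun ω => Y (i, j) ω ^ 2) μ := (hL2 (i, j)).integrable_sq
    have hEY : ∫ ω, Y (i, j) ω ∂μ = b' (θ i j) := hmean i j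
    have hEY2 : ∫ ω, Y (i, j) ω ^ 2 ∂μ = a * b'' (θ i j) + b' (θ i j) ^ 2 := by
      have hv := ProbabilityTheory.variance_eq_sub (hL2 (i, j))
      rw [hvar i j] at hv
      have h2 : (∫ ω, (Y (i, j) ^ 2) ω ∂μ) = ∫ ω, Y (i, j) ω ^ 2 ∂μ := by
        apply integral_congr_ae; filter_upwards with ω; simp [Pi.pow_apply]
      rw [h2, hEY] at hv
      linarith
    set c := θ i j - ζ i j with hc
    set d := b (ζ i j) - b (θ i j) with hd
    have i1 : Integrable (fun ω => c ^ 2 * Y (i, j) ω ^ 2) μ := hY2int.const_mul _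
    have i2 : Integrable (fun ω => 2 * c * d * Y (i, j) ω) μ := hYint.const_mul _
    have hint : ∫ ω, (Y (i, j) ω * c - b (θ i j) + b (ζ i j)) ^ 2 ∂μ
        = c ^ 2 * (a * b'' (θ i j)) + (b' (θ i j) * c + d) ^ 2 := by
      have heq : ∀ ω, (Y (i, j) ω * c - b (θ i j) + b (ζ i j)) ^ 2
          = (c ^ 2 * Y (i, j) ω ^ 2 + 2 * c * d * Y (i, j) ω) + d ^ 2 := by
        intro ω; rw [hd]; ring
      have i12 : Integrable (fun ω => c ^ 2 * Y (i, j) ω ^ 2 + 2 * c * d * Y (i, j) ω) μ :=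
        i1.add i2
      rw [integral_congr_ae (Filter.Eventually.of_forall heq),
        integral_add i12 (integrable_const _),
        integral_add i1 i2, integral_const_mul, integral_const_mul, integral_const,
        hEY, hEY2]
      simp only [probReal_univ, smul_eq_mul, one_mul]
      ring
    rw [hint]
    obtain ⟨hm1, hm2⟩ := hm (θ i j) (ζ i j)
    exact per_term_bound a C_U (b'' (θ i j)) _ c ha (hnn _) (hub _)
      (by rw [hc, hd]; linarith) (by rw [hc, hd]; linarith)
  -- sum up
  set S := ∑ i, ∑ j, (θ i j - ζ i j) ^ 2 with hS
  have e1 : (∑ p : Fin n × Fin q, ((θ p.1 p.2 - ζ p.1 p.2) ^ 2) ^ 2)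
      = ∑ i, ∑ j, ((θ i j - ζ i j) ^ 2) ^ 2 :=
    Fintype.sum_prod_type (f := fun p => ((θ p.1 p.2 - ζ p.1 p.2) ^ 2) ^ 2)
  have e2 : (∑ p : Fin n × Fin q, (θ p.1 p.2 - ζ p.1 p.2) ^ 2)
      = ∑ i, ∑ j, (θ i j - ζ i j) ^ 2 :=
    Fintype.sum_prod_type (f := fun p => (θ p.1 p.2 - ζ p.1 p.2) ^ 2)
  have hsum4 : ∑ i, ∑ j, ((θ i j - ζ i j) ^ 2) ^ 2 ≤ S ^ 2 := by
    rw [hS, ← e1, ← e2]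
    exact Finset.sum_sq_le_sq_sum_of_nonneg (fun p _ => sq_nonneg _)
  have hsum : ∑ i, ∑ j, ∫ ω, (Y (i, j) ω * (θ i j - ζ i j) - b (θ i j) + b (ζ i j)) ^ 2 ∂μ
      ≤ a * C_U * S + C_U ^ 2 / 4 * S ^ 2 := by
    calc ∑ i, ∑ j, ∫ ω, (Y (i, j) ω * (θ i j - ζ i j) - b (θ i j) + b (ζ i j)) ^ 2 ∂μ
        ≤ ∑ i, ∑ j, (a * C_U * (θ i j - ζ i j) ^ 2 + C_U ^ 2 / 4 * ((θ i j - ζ i j) ^ 2) ^ 2) := by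
          apply Finset.sum_le_sum; intro i _
          exact Finset.sum_le_sum fun j _ => key i j
      _ = a * C_U * S + C_U ^ 2 / 4 * (∑ i, ∑ j, ((θ i j - ζ i j) ^ 2) ^ 2) := by
          simp [Finset.sum_add_distrib, Finset.mul_sum, hS]
      _ ≤ a * C_U * S + C_U ^ 2 / 4 * S ^ 2 := by
          have hc4 : (0:ℝ) ≤ C_U ^ 2 / 4 := by positivity
          nlinarith [hsum4]
  have hn1 : (1:ℝ) ≤ (n:ℝ) := by exact_mod_cast hn
  have hq1 : (1:ℝ) ≤ (q:ℝ) := by exact_mod_cast hq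
  have hmul : (1 / (a ^ 2 * n * q)) *
      ∑ i, ∑ j, ∫ ω, (Y (i, j) ω * (θ i j - ζ i j) - b (θ i j) + b (ζ i j)) ^ 2 ∂μ
      ≤ (1 / (a ^ 2 * n * q)) * (a * C_U * S + C_U ^ 2 / 4 * S ^ 2) := by
    apply mul_le_mul_of_nonneg_left hsum
    positivity
  refine hmul.trans_eq ?_
  rw [hS]
  have hnne : (n:ℝ) ≠ 0 := by linarith
  have hqne : (q:ℝ) ≠ 0 := by linarith
  field_simp
end

section
/- For 0 < α ≤ β < 1 and probability measures P, R: (α/β)·((1−β)/(1−α))·D_β(P,R) ≤ D_α(P,R) ≤ D_β(P,R), where D_γ denotes the Rényi divergence of order γ. -/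
/-!
Write `H(γ) = ∫ p^γ r^(1-γ)`. Hölder's inequality makes `log H` convex on `[0, 1]`, and
`H(0) = H(1) = 1` for probability densities. Writing `α` as a convex combination of `0` and `β`
gives `H(α) ≤ H(β)^(α/β)`, and writing `β` as one of `α` and `1` gives
`H(β) ≤ H(α)^((1-β)/(1-α))`. Taking logarithms and dividing by the negative numbers `α - 1`,
`β - 1`, these are exactly the lower and the upper bound.
-/

open MeasureTheory Real

section Holder

variable {Ω : Type*} [MeasurableSpace Ω] {μ : Measure Ω}

theorem integral_rpow_mul_rpow_le {f g : Ω → ℝ} (hf : 0 ≤ᵐ[μ] f) (hg : 0 ≤ᵐ[μ] g)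
    (hfi : Integrable f μ) (hgi : Integrable g μ) {s t : ℝ} (hs : 0 ≤ s) (ht : 0 ≤ t)
    (hst : s + t = 1) :
    ∫ x, f x ^ s * g x ^ t ∂μ ≤ (∫ x, f x ∂μ) ^ s * (∫ x, g x ∂μ) ^ t := by
  have hprod_nonneg : 0 ≤ᵐ[μ] fun x => f x ^ s * g x ^ t := by
    filter_upwards [hf, hg] with x hfx hgx
    exact mul_nonneg (rpow_nonneg hfx s) (rpow_nonneg hgx t)
  have hprod_meas : AEStronglyMeasurable (fun x => f x ^ s * g x ^ t) μ :=
    ((continuous_rpow_const hs).comp_aestronglyMeasurable hfi.1).mul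
      ((continuous_rpow_const ht).comp_aestronglyMeasurable hgi.1)
  have hofReal : ∀ᵐ x ∂μ, ENNReal.ofReal (f x ^ s * g x ^ t) =
      ENNReal.ofReal (f x) ^ s * ENNReal.ofReal (g x) ^ t := by
    filter_upwards [hf, hg] with x hfx hgx
    rw [ENNReal.ofReal_mul (rpow_nonneg hfx s), ENNReal.ofReal_rpow_of_nonneg hfx hs,
      ENNReal.ofReal_rpow_of_nonneg hgx ht]
  have hbound_ne_top : (∫⁻ x, ENNReal.ofReal (f x) ∂μ) ^ s * (∫⁻ x, ENNReal.ofReal (g x) ∂μ) ^ t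
      ≠ ⊤ :=
    ENNReal.mul_ne_top (ENNReal.rpow_ne_top_of_nonneg hs hfi.lintegral_lt_top.ne)
      (ENNReal.rpow_ne_top_of_nonneg ht hgi.lintegral_lt_top.ne)
  calc ∫ x, f x ^ s * g x ^ t ∂μ
      = (∫⁻ x, ENNReal.ofReal (f x) ^ s * ENNReal.ofReal (g x) ^ t ∂μ).toReal := by
        rw [integral_eq_lintegral_of_nonneg_ae hprod_nonneg hprod_meas, lintegral_congr_ae hofReal]
    _ ≤ ((∫⁻ x, ENNReal.ofReal (f x) ∂μ) ^ s * (∫⁻ x, ENNReal.ofReal (g x) ∂μ) ^ t).toReal :=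
        ENNReal.toReal_mono hbound_ne_top <|
          ENNReal.lintegral_mul_norm_pow_le hfi.1.aemeasurable.ennreal_ofReal
            hgi.1.aemeasurable.ennreal_ofReal hs ht hst
    _ = (∫ x, f x ∂μ) ^ s * (∫ x, g x ∂μ) ^ t := by
        rw [ENNReal.toReal_mul, ← ENNReal.toReal_rpow, ← ENNReal.toReal_rpow,
          ← integral_eq_lintegral_of_nonneg_ae hf hfi.1,
          ← integral_eq_lintegral_of_nonneg_ae hg hgi.1]

end Holder

theorem rpow_mul_rpow_one_sub_mul_add_mul {x y : ℝ} (hx : 0 ≤ x) (hy : 0 ≤ y) {a b : ℝ}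
    (ha : a ∈ Set.Icc (0 : ℝ) 1) (hb : b ∈ Set.Icc (0 : ℝ) 1) {s t : ℝ} (hs : 0 ≤ s) (ht : 0 ≤ t)
    (hst : s + t = 1) :
    (x ^ a * y ^ (1 - a)) ^ s * (x ^ b * y ^ (1 - b)) ^ t
      = x ^ (s * a + t * b) * y ^ (1 - (s * a + t * b)) := by
  obtain ⟨ha0, ha1⟩ := ha
  obtain ⟨hb0, hb1⟩ := hb
  have hy_exp : 1 - (s * a + t * b) = (1 - a) * s + (1 - b) * t := by
    linear_combination -hst
  rw [hy_exp, mul_comm s a, mul_comm t b, mul_rpow (rpow_nonneg hx _) (rpow_nonneg hy _),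
    mul_rpow (rpow_nonneg hx _) (rpow_nonneg hy _), ← rpow_mul hx, ← rpow_mul hy,
    ← rpow_mul hx, ← rpow_mul hy, rpow_add_of_nonneg hx (mul_nonneg ha0 hs) (mul_nonneg hb0 ht),
    rpow_add_of_nonneg hy (mul_nonneg (sub_nonneg.2 ha1) hs) (mul_nonneg (sub_nonneg.2 hb1) ht)]
  exact mul_mul_mul_comm _ _ _ _

/-- Since `log 0 = 0`, the claim needs `A` and `B` to vanish together; `hBA` provides this. -/
theorem log_le_mul_log_of_le_rpow_of_le_rpow {A B s m : ℝ} (hA : 0 ≤ A) (hB : 0 ≤ B)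
    (hs : s ≠ 0) (hm : m ≠ 0) (hAB : A ≤ B ^ s) (hBA : B ≤ A ^ m) : log A ≤ s * log B := by
  obtain rfl | hA_pos := hA.eq_or_lt
  · obtain rfl : B = 0 := le_antisymm (by simpa [zero_rpow hm] using hBA) hB
    simp
  have hB_pos : 0 < B := hB.lt_of_ne <| by rintro rfl; simp [zero_rpow hs] at hAB; linarith
  rw [← log_rpow hB_pos]
  exact log_le_log hA_pos hAB

section Hellinger

variable {Ω : Type*} [MeasurableSpace Ω] (μ : Measure Ω) (p r : Ω → ℝ)

/-- For `γ ∈ (0, 1)` the Rényi divergence of order `γ` is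
`log (hellingerIntegral μ p r γ) / (γ - 1)`. -/
noncomputable def hellingerIntegral (γ : ℝ) : ℝ :=
  ∫ x, p x ^ γ * r x ^ (1 - γ) ∂μ

variable {μ p r}

theorem hellingerIntegral_nonneg (hp : ∀ x, 0 ≤ p x) (hr : ∀ x, 0 ≤ r x) (γ : ℝ) :
    0 ≤ hellingerIntegral μ p r γ :=
  integral_nonneg fun x => mul_nonneg (rpow_nonneg (hp x) _) (rpow_nonneg (hr x) _)

theorem hellingerIntegral_mul_add_mul_le (hp : ∀ x, 0 ≤ p x) (hr : ∀ x, 0 ≤ r x) {a b : ℝ}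
    (ha : a ∈ Set.Icc (0 : ℝ) 1) (hb : b ∈ Set.Icc (0 : ℝ) 1)
    (hia : Integrable (fun x => p x ^ a * r x ^ (1 - a)) μ)
    (hib : Integrable (fun x => p x ^ b * r x ^ (1 - b)) μ)
    {s t : ℝ} (hs : 0 ≤ s) (ht : 0 ≤ t) (hst : s + t = 1) :
    hellingerIntegral μ p r (s * a + t * b)
      ≤ hellingerIntegral μ p r a ^ s * hellingerIntegral μ p r b ^ t := by
  have nonneg (γ : ℝ) : 0 ≤ᵐ[μ] fun x => p x ^ γ * r x ^ (1 - γ) :=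
    ae_of_all _ fun x => mul_nonneg (rpow_nonneg (hp x) _) (rpow_nonneg (hr x) _)
  unfold hellingerIntegral
  simp_rw [← rpow_mul_rpow_one_sub_mul_add_mul (hp _) (hr _) ha hb hs ht hst]
  exact integral_rpow_mul_rpow_le (nonneg a) (nonneg b) hia hib hs ht hst

@[simp]
theorem hellingerIntegral_zero : hellingerIntegral μ p r 0 = ∫ x, r x ∂μ := by
  simp [hellingerIntegral]

@[simp]
theorem hellingerIntegral_one : hellingerIntegral μ p r 1 = ∫ x, p x ∂μ := by
  simp [hellingerIntegral]

theorem hellingerIntegral_le_rpow_div (hp : ∀ x, 0 ≤ p x) (hr : ∀ x, 0 ≤ r x)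
    (hri : Integrable r μ) (hr1 : ∫ x, r x ∂μ = 1) {a b : ℝ} (ha : 0 ≤ a) (hab : a ≤ b)
    (hb : b ≤ 1) (hb0 : 0 < b) (hib : Integrable (fun x => p x ^ b * r x ^ (1 - b)) μ) :
    hellingerIntegral μ p r a ≤ hellingerIntegral μ p r b ^ (a / b) := by
  have hs : 0 ≤ a / b := div_nonneg ha hb0.le
  have ht : 0 ≤ 1 - a / b := sub_nonneg.2 ((div_le_one hb0).2 hab)
  have hi0 : Integrable (fun x => p x ^ (0 : ℝ) * r x ^ (1 - (0 : ℝ))) μ := by simpa using hri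
  calc hellingerIntegral μ p r a
      = hellingerIntegral μ p r (a / b * b + (1 - a / b) * 0) := by
        rw [mul_zero, add_zero, div_mul_cancel₀ a hb0.ne']
    _ ≤ hellingerIntegral μ p r b ^ (a / b) * hellingerIntegral μ p r 0 ^ (1 - a / b) :=
        hellingerIntegral_mul_add_mul_le hp hr ⟨hb0.le, hb⟩ ⟨le_rfl, zero_le_one⟩ hib hi0 hs ht
          (add_sub_cancel _ _)
    _ = hellingerIntegral μ p r b ^ (a / b) := by simp [hr1]

theorem hellingerIntegral_le_rpow_one_sub_div (hp : ∀ x, 0 ≤ p x) (hr : ∀ x, 0 ≤ r x)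
    (hpi : Integrable p μ) (hp1 : ∫ x, p x ∂μ = 1) {a b : ℝ} (ha : 0 ≤ a) (hab : a ≤ b)
    (hb : b ≤ 1) (ha1 : a < 1) (hia : Integrable (fun x => p x ^ a * r x ^ (1 - a)) μ) :
    hellingerIntegral μ p r b ≤ hellingerIntegral μ p r a ^ ((1 - b) / (1 - a)) := by
  have h1a : 0 < 1 - a := sub_pos.2 ha1
  have hs : 0 ≤ (1 - b) / (1 - a) := div_nonneg (sub_nonneg.2 hb) h1a.le
  have ht : 0 ≤ 1 - (1 - b) / (1 - a) := sub_nonneg.2 ((div_le_one h1a).2 (by linarith))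
  have hi1 : Integrable (fun x => p x ^ (1 : ℝ) * r x ^ (1 - (1 : ℝ))) μ := by simpa using hpi
  calc hellingerIntegral μ p r b
      = hellingerIntegral μ p r ((1 - b) / (1 - a) * a + (1 - (1 - b) / (1 - a)) * 1) := by
        congr 1; field_simp; ring
    _ ≤ hellingerIntegral μ p r a ^ ((1 - b) / (1 - a))
          * hellingerIntegral μ p r 1 ^ (1 - (1 - b) / (1 - a)) :=
        hellingerIntegral_mul_add_mul_le hp hr ⟨ha, ha1.le⟩
          ⟨zero_le_one, le_rfl⟩ hia hi1 hs ht (add_sub_cancel _ _)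
    _ = hellingerIntegral μ p r a ^ ((1 - b) / (1 - a)) := by simp [hp1]

end Hellinger

theorem renyi_order_equivalence_general {Ω : Type*} [MeasurableSpace Ω] (μ : Measure Ω)
    (p r : Ω → ℝ) (hp : ∀ x, 0 ≤ p x) (hr : ∀ x, 0 ≤ r x)
    (hpi : Integrable p μ) (hri : Integrable r μ)
    (hp1 : ∫ x, p x ∂μ = 1) (hr1 : ∫ x, r x ∂μ = 1)
    (α β : ℝ) (hα : 0 < α) (hαβ : α ≤ β) (hβ : β < 1)
    (hintα : Integrable (fun x => (p x) ^ α * (r x) ^ (1 - α)) μ)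
    (hintβ : Integrable (fun x => (p x) ^ β * (r x) ^ (1 - β)) μ) :
    (α / β) * ((1 - β) / (1 - α)) *
        ((1 / (β - 1)) * Real.log (∫ x, (p x) ^ β * (r x) ^ (1 - β) ∂μ))
      ≤ (1 / (α - 1)) * Real.log (∫ x, (p x) ^ α * (r x) ^ (1 - α) ∂μ)
    ∧ (1 / (α - 1)) * Real.log (∫ x, (p x) ^ α * (r x) ^ (1 - α) ∂μ)
      ≤ (1 / (β - 1)) * Real.log (∫ x, (p x) ^ β * (r x) ^ (1 - β) ∂μ) := by
  have hβ0 : 0 < β := hα.trans_le hαβ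
  have hA := hellingerIntegral_nonneg (μ := μ) hp hr α
  have hB := hellingerIntegral_nonneg (μ := μ) hp hr β
  have hAB := hellingerIntegral_le_rpow_div hp hr hri hr1 hα.le hαβ hβ.le hβ0 hintβ
  have hBA := hellingerIntegral_le_rpow_one_sub_div hp hr hpi hp1 hα.le hαβ hβ.le
    (hαβ.trans_lt hβ) hintα
  have hs : α / β ≠ 0 := by positivity
  have hm : (1 - β) / (1 - α) ≠ 0 := div_ne_zero (by linarith) (by linarith)
  have hα1 : α - 1 < 0 := by linarith
  have hβ1 : β - 1 < 0 := by linarith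
  have h1α : 1 - α ≠ 0 := by linarith
  constructor
  · calc α / β * ((1 - β) / (1 - α)) * (1 / (β - 1) * log (hellingerIntegral μ p r β))
        = 1 / (α - 1) * (α / β * log (hellingerIntegral μ p r β)) := by
          field_simp [hα1.ne, hβ1.ne, h1α]; ring
      _ ≤ 1 / (α - 1) * log (hellingerIntegral μ p r α) :=
          mul_le_mul_of_nonpos_left (log_le_mul_log_of_le_rpow_of_le_rpow hA hB hs hm hAB hBA)
            (one_div_neg.2 hα1).le
  · calc 1 / (α - 1) * log (hellingerIntegral μ p r α)
        = 1 / (β - 1) * ((1 - β) / (1 - α) * log (hellingerIntegral μ p r α)) := by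
          field_simp [hα1.ne, hβ1.ne, h1α]; ring
      _ ≤ 1 / (β - 1) * log (hellingerIntegral μ p r β) :=
          mul_le_mul_of_nonpos_left (log_le_mul_log_of_le_rpow_of_le_rpow hB hA hm hs hBA hAB)
            (one_div_neg.2 hβ1).le

/-- Equivalence of Rényi divergences of orders in `(0,1)` (van Erven–Harremoës):
for `0 < α ≤ β < 1`, `(α/β)((1-β)/(1-α)) D_β ≤ D_α ≤ D_β`. -/
theorem renyi_order_equivalence {Ω : Type*} [MeasurableSpace Ω] (μ : Measure Ω)
    (p r : Ω → ℝ) (hp : ∀ x, 0 ≤ p x) (hr : ∀ x, 0 ≤ r x)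
    (hpm : Measurable p) (hrm : Measurable r)
    (hpi : Integrable p μ) (hri : Integrable r μ)
    (hp1 : ∫ x, p x ∂μ = 1) (hr1 : ∫ x, r x ∂μ = 1)
    (α β : ℝ) (hα : 0 < α) (hαβ : α ≤ β) (hβ : β < 1)
    (hintα : Integrable (fun x => (p x) ^ α * (r x) ^ (1 - α)) μ)
    (hintβ : Integrable (fun x => (p x) ^ β * (r x) ^ (1 - β)) μ) :
    (α / β) * ((1 - β) / (1 - α)) *
        ((1 / (β - 1)) * Real.log (∫ x, (p x) ^ β * (r x) ^ (1 - β) ∂μ))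
      ≤ (1 / (α - 1)) * Real.log (∫ x, (p x) ^ α * (r x) ^ (1 - α) ∂μ)
    ∧ (1 / (α - 1)) * Real.log (∫ x, (p x) ^ α * (r x) ^ (1 - α) ∂μ)
      ≤ (1 / (β - 1)) * Real.log (∫ x, (p x) ^ β * (r x) ^ (1 - β) ∂μ) :=
  renyi_order_equivalence_general μ p r hp hr hpi hri hp1 hr1 α β hα hαβ hβ hintα hintβ
end
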